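/- Let $A$ be a unital associative ring and let $k > 1$ be an integer. Then for all $g_1, \dots, g_k, h_1, h_2, h_3 \in A$, writing $c = [g_1, \dots, g_k]$, the element $[c, h_1][h_2, h_3] + [c, h_2][h_1, h_3]$ belongs to $T^{(k+2)}(A)$. -/
import Mathlib


/-- The ring commutator `[a, b] = a * b - b * a`. -/
def brk {A : Type*} [NonUnitalNonAssocRing A] (a b : A) : A := a * b - b * a

/-- The left-normed commutator `[a 0, a 1, ..., a (k-1)]`. -/
def lnc {A : Type*} [NonUnitalNonAssocRing A] : ∀ {k : ℕ}, (Fin k → A) → A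
  | 0, _ => 0
  | 1, a => a 0
  | k + 2, a => brk (lnc (Fin.init a)) (a (Fin.last (k + 1)))

/-- `T A m` is the two-sided ideal of `A` generated by all left-normed commutators
of length `m` (for `m = 1` this is all of `A`). -/
def T (A : Type*) [NonUnitalNonAssocRing A] (m : ℕ) : TwoSidedIdeal A :=
  TwoSidedIdeal.span {x | ∃ a : Fin m → A, x = lnc a}

lemma lnc_snoc {A : Type*} [NonUnitalNonAssocRing A] {n : ℕ} (g : Fin (n + 1) → A) (x : A) :
    lnc (Fin.snoc g x) = brk (lnc g) x := by
  show lnc (k := n + 2) (Fin.snoc g x) = brk (lnc g) x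
  rw [lnc]
  simp [Fin.init_snoc, Fin.snoc_last]

lemma lnc_mem {A : Type*} [NonUnitalNonAssocRing A] {m : ℕ} (a : Fin m → A) :
    lnc a ∈ T A m :=
  TwoSidedIdeal.subset_span ⟨a, rfl⟩

theorem comm_h_mul_comm_h_add_mem {A : Type*} [Ring A] (k : ℕ) (hk : 1 < k)
    (g : Fin k → A) (h₁ h₂ h₃ : A) :
    brk (lnc g) h₁ * brk h₂ h₃ + brk (lnc g) h₂ * brk h₁ h₃ ∈ T A (k + 2) := by
  obtain ⟨m, rfl⟩ : ∃ m, k = m + 1 := ⟨k - 1, by omega⟩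
  set c := lnc g with hc
  have G1 : brk (brk c (h₁ * h₂)) h₃ ∈ T A (m + 1 + 2) := by
    have := lnc_mem (A := A) (Fin.snoc (Fin.snoc g (h₁ * h₂)) h₃)
    rwa [lnc_snoc, lnc_snoc] at this
  have G2 : brk (brk c h₁) h₃ * h₂ ∈ T A (m + 1 + 2) := by
    apply TwoSidedIdeal.mul_mem_right
    have := lnc_mem (A := A) (Fin.snoc (Fin.snoc g h₁) h₃)
    rwa [lnc_snoc, lnc_snoc] at this
  have G3 : h₁ * brk (brk c h₂) h₃ ∈ T A (m + 1 + 2) := by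
    apply TwoSidedIdeal.mul_mem_left
    have := lnc_mem (A := A) (Fin.snoc (Fin.snoc g h₂) h₃)
    rwa [lnc_snoc, lnc_snoc] at this
  have G4 : brk (brk c h₂) h₁ ∈ T A (m + 1 + 2) := by
    have := lnc_mem (A := A) (Fin.snoc (Fin.snoc g h₂) h₁)
    rwa [lnc_snoc, lnc_snoc] at this
  have G5 : brk (brk c h₂) h₃ ∈ T A (m + 1 + 2) := by
    have := lnc_mem (A := A) (Fin.snoc (Fin.snoc g h₂) h₃)
    rwa [lnc_snoc, lnc_snoc] at this
  have key : brk c h₁ * brk h₂ h₃ + brk c h₂ * brk h₁ h₃ =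
      brk (brk c (h₁ * h₂)) h₃ - brk (brk c h₁) h₃ * h₂ - h₁ * brk (brk c h₂) h₃
        + (brk (brk c h₂) h₁ * h₃ - h₃ * brk (brk c h₂) h₁)
        - (brk (brk c h₂) h₃ * h₁ - h₁ * brk (brk c h₂) h₃) := by
    simp only [brk]; noncomm_ring
  rw [key]
  exact sub_mem (add_mem (sub_mem (sub_mem G1 G2) G3)
      (sub_mem (TwoSidedIdeal.mul_mem_right _ _ _ G4) (TwoSidedIdeal.mul_mem_left _ _ _ G4)))
    (sub_mem (TwoSidedIdeal.mul_mem_right _ _ _ G5) (TwoSidedIdeal.mul_mem_left _ _ _ G5))
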